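/- Let Λ ∈ P_l^+. For every Λ-path p ∈ 𝒫(Λ) there exists a cylindrical l-multipartition λ of highest weight Λ with π(λ) = p which is higher than every cylindrical l-multipartition μ of highest weight Λ with π(μ) = p; moreover such λ is unique. In particular π, restricted to cylindrical multipartitions of highest weight Λ, is surjective onto 𝒫(Λ). -/

import Mathlib

open scoped BigOperators

namespace BF

/-- The fundamental weight `Λ_i`, viewed as the indicator function `ZMod n → ℤ` of `i`. -/
def Lam (n : ℕ) (i : ZMod n) : ZMod n → ℤ := fun j => if j = i then 1 else 0

/-- A weight is dominant if all its coefficients are nonnegative. -/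
def Dominant (n : ℕ) (a : ZMod n → ℤ) : Prop := ∀ i, 0 ≤ a i

/-- The step weight of `e : ZMod n → ℕ`: its `Λ_j`-coefficient is `e (j-1) - e j`. -/
def stepWt (n : ℕ) (e : ZMod n → ℕ) : ZMod n → ℤ := fun j => (e (j - 1) : ℤ) - (e j : ℤ)

/-- Membership in `A_l^+`: `d` is the step weight of some `e : ZMod n → ℕ` of total sum `l`. -/
def InA (n : ℕ) [NeZero n] (l : ℕ) (d : ZMod n → ℤ) : Prop :=
  ∃ e : ZMod n → ℕ, (∑ i, e i) = l ∧ d = stepWt n e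

/-- The ground-state path of the weight `Λ`: `p̄_k (i) = Λ (i - k)`,
which is the coefficient form of `p̄_k = Λ_{v₀+k} + ⋯ + Λ_{v_{l-1}+k}`. -/
def gsp (n : ℕ) (Λ : ZMod n → ℤ) (k : ℕ) : ZMod n → ℤ := fun i => Λ (i - (k : ZMod n))

/-- `p` is a `Λ`-path of level `l`. -/
def IsPath (n : ℕ) [NeZero n] (l : ℕ) (Λ : ZMod n → ℤ) (p : ℕ → ZMod n → ℤ) : Prop :=
  (∀ k, InA n l (fun i => p (k + 1) i - p k i)) ∧ ∃ K, ∀ k ≥ K, p k = gsp n Λ k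

/-- The length of a `Λ`-path: least `K` with `p k = p̄ k` for all `k ≥ K`. -/
noncomputable def pathLen (n : ℕ) (Λ : ZMod n → ℤ) (p : ℕ → ZMod n → ℤ) : ℕ :=
  sInf {K | ∀ k ≥ K, p k = gsp n Λ k}

/-- `f : ℕ → ℕ` is a partition (rows are indexed from `0`). -/
def IsPartitionF (f : ℕ → ℕ) : Prop := (∀ i, f (i + 1) ≤ f i) ∧ ∃ N, ∀ i ≥ N, f i = 0

/-- An `l`-multipartition. -/
def IsMP (l : ℕ) (lam : Fin l → ℕ → ℕ) : Prop := ∀ j, IsPartitionF (lam j)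

/-- The data `v : Fin l → ℕ` of a decomposition `Λ = Λ_{v 0} + ⋯ + Λ_{v (l-1)}`
with `0 ≤ v 0 ≤ ⋯ ≤ v (l-1) < n`. -/
def SortedV (n l : ℕ) (v : Fin l → ℕ) : Prop := Monotone v ∧ ∀ j, v j < n

/-- The weight `Λ = Λ_{v 0} + ⋯ + Λ_{v (l-1)}` determined by `v`. -/
def wtOf (n : ℕ) {l : ℕ} (v : Fin l → ℕ) : ZMod n → ℤ :=
  fun i => ((Finset.univ.filter fun j : Fin l => ((v j : ZMod n) = i)).card : ℤ)

/-- The colour of the node in (0-based) row `i`, (1-based) column `c` of component `j`: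
`(c - (i+1) + v j) mod n`. -/
def colour (n : ℕ) {l : ℕ} (v : Fin l → ℕ) (j : Fin l) (i c : ℕ) : ZMod n :=
  (c : ZMod n) - (i : ZMod n) - 1 + (v j : ZMod n)

/-- `N^r(λ)`: the total number of nodes of colour `r` in the multipartition `λ`. -/
noncomputable def Ncolour (n : ℕ) {l : ℕ} (v : Fin l → ℕ) (lam : Fin l → ℕ → ℕ)
    (r : ZMod n) : ℕ :=
  Nat.card {x : Fin l × ℕ × ℕ //
    1 ≤ x.2.2 ∧ x.2.2 ≤ lam x.1 x.2.1 ∧ colour n v x.1 x.2.1 x.2.2 = r}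

/-- The height `f′_m` of the `m`-th column of the partition `f`. -/
noncomputable def colHt (f : ℕ → ℕ) (m : ℕ) : ℕ := Nat.card {i : ℕ // m ≤ f i}

/-- The function `e` whose step weight is the `k`-th step of `π(λ)`:
`e i = #{j : v j + k - λ^{(j)′}_{k+1} ≡ i mod n}`. -/
noncomputable def eFun (n : ℕ) {l : ℕ} (v : Fin l → ℕ) (lam : Fin l → ℕ → ℕ) (k : ℕ) :
    ZMod n → ℕ :=
  fun i => Nat.card {j : Fin l //
    (v j : ZMod n) + (k : ZMod n) - (colHt (lam j) (k + 1) : ZMod n) = i}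

/-- `p = π(λ)` where `λ` is an `l`-multipartition of highest weight `wtOf n v`. -/
def IsPi (n : ℕ) {l : ℕ} (v : Fin l → ℕ) (lam : Fin l → ℕ → ℕ)
    (p : ℕ → ZMod n → ℤ) : Prop :=
  (∀ k, (fun i => p (k + 1) i - p k i) = stepWt n (eFun n v lam k)) ∧
  ∃ K, ∀ k ≥ K, p k = gsp n (wtOf n v) k

/-- `λ` is cylindrical of highest weight `Λ = wtOf n v`. -/
def Cylindrical (n : ℕ) {l : ℕ} (v : Fin l → ℕ) (lam : Fin l → ℕ → ℕ) : Prop :=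
  (∀ (j : ℕ) (hj : j + 1 < l) (i : ℕ),
      lam ⟨j + 1, hj⟩ (i + (v ⟨j + 1, hj⟩ - v ⟨j, Nat.lt_of_succ_lt hj⟩)) ≤
        lam ⟨j, Nat.lt_of_succ_lt hj⟩ i) ∧
  ∀ (hl : 0 < l) (i : ℕ),
      lam ⟨0, hl⟩ (i + (n + v ⟨0, hl⟩ - v ⟨l - 1, Nat.sub_lt hl Nat.one_pos⟩)) ≤
        lam ⟨l - 1, Nat.sub_lt hl Nat.one_pos⟩ i

/-- `λ` is higher than `μ`: every column of each component of `λ` is at most as high as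
the corresponding column of `μ`. -/
def Higher {l : ℕ} (lam mu : Fin l → ℕ → ℕ) : Prop :=
  ∀ (j : Fin l) (k : ℕ), 1 ≤ k → colHt (lam j) k ≤ colHt (mu j) k

/-- `λ` is the highest-lift of the path `p`: it is a cylindrical multipartition with
`π(λ) = p` which is higher than every cylindrical multipartition mapping to `p`. -/
def IsHL (n : ℕ) {l : ℕ} (v : Fin l → ℕ) (lam : Fin l → ℕ → ℕ)
    (p : ℕ → ZMod n → ℤ) : Prop :=
  IsMP l lam ∧ Cylindrical n v lam ∧ IsPi n v lam p ∧
    ∀ mu : Fin l → ℕ → ℕ, IsMP l mu → Cylindrical n v mu → IsPi n v mu p → Higher lam mu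

/-- `λ ∈ 𝒴(Λ)` with `Λ = wtOf n v`. -/
def InY (n : ℕ) {l : ℕ} (v : Fin l → ℕ) (lam : Fin l → ℕ → ℕ) : Prop :=
  ∃ p, IsHL n v lam p

/-- `α′_r = -Λ_{r-1} + 2Λ_r - Λ_{r+1}`. -/
def alphaP (n : ℕ) (r : ZMod n) : ZMod n → ℤ :=
  fun i => -(Lam n (r - 1) i) + 2 * Lam n r i - Lam n (r + 1) i

/-- `ψ_r(k)`: the number of length-`k` rows of `λ` whose right end has colour `r`. -/
noncomputable def psiCount (n : ℕ) {l : ℕ} (v : Fin l → ℕ) (lam : Fin l → ℕ → ℕ)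
    (k : ℕ) (r : ZMod n) : ℕ :=
  Nat.card {x : Fin l × ℕ // lam x.1 x.2 = k ∧ colour n v x.1 x.2 k = r}

/-- The number of length-`k` rows of `λ` whose left end has colour `r`. -/
noncomputable def leftCount (n : ℕ) {l : ℕ} (v : Fin l → ℕ) (lam : Fin l → ℕ → ℕ)
    (k : ℕ) (r : ZMod n) : ℕ :=
  Nat.card {x : Fin l × ℕ // lam x.1 x.2 = k ∧ colour n v x.1 x.2 1 = r}

/-- The total number of length-`k` rows of `λ`. -/
noncomputable def rowCount {l : ℕ} (lam : Fin l → ℕ → ℕ) (k : ℕ) : ℕ :=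
  Nat.card {x : Fin l × ℕ // lam x.1 x.2 = k}

/-- `m_r(k)`: the number of `r`-nodes of `λ` in column `k` or to its right. -/
noncomputable def mCount (n : ℕ) {l : ℕ} (v : Fin l → ℕ) (lam : Fin l → ℕ → ℕ)
    (k : ℕ) (r : ZMod n) : ℕ :=
  Nat.card {x : Fin l × ℕ × ℕ //
    k ≤ x.2.2 ∧ x.2.2 ≤ lam x.1 x.2.1 ∧ colour n v x.1 x.2.1 x.2.2 = r}

/-- `p` is a `(Λ′,Λ″)`-restricted path, where `l''` is the level of `Λ″`:
`p - Λ′ ∈ 𝒫(Λ″)` and `p_k - η̂_k` is dominant for all `k`. -/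
def IsRes (n : ℕ) [NeZero n] (l'' : ℕ) (L' L'' : ZMod n → ℤ) (p : ℕ → ZMod n → ℤ) : Prop :=
  IsPath n l'' L'' (fun k i => p k i - L' i) ∧
  ∀ k, ∃ e : ZMod n → ℕ, (∑ i, e i) = l'' ∧
    (fun i => p (k + 1) i - p k i) = stepWt n e ∧ ∀ i, (e i : ℤ) ≤ p k i

/-- The length of a restricted path: `ℓ(p) = ℓ(p - Λ′)`. -/
noncomputable def resLen (n : ℕ) (L' L'' : ZMod n → ℤ) (p : ℕ → ZMod n → ℤ) : ℕ :=
  sInf {K | ∀ k ≥ K, (fun i => p k i - L' i) = gsp n L'' k}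

/-- `♯Λ`. -/
def sharpWt (n : ℕ) (Λ : ZMod n → ℤ) : ZMod n → ℤ := fun i => Λ (-i)

/-- `♯p`: `(♯p)_k (i) = a_{k-i}(k)` where `p_k = ∑ a_i(k) Λ_i`. -/
def sharpPath (n : ℕ) (p : ℕ → ZMod n → ℤ) : ℕ → ZMod n → ℤ :=
  fun k i => p k ((k : ZMod n) - i)

/-- `θ(a) = 1` if `a ≥ 0`, `0` otherwise. -/
def theta (a : ℤ) : ℕ := if 0 ≤ a then 1 else 0

/-- The function counting the entries of `μ : Fin l → ℕ` in each class mod `n`. -/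
def cntF (n : ℕ) {l : ℕ} (μ : Fin l → ℕ) : ZMod n → ℕ :=
  fun i => (Finset.univ.filter fun j : Fin l => ((μ j : ZMod n) = i)).card

/-- The energy function `H` on `A_l^+ × A_l^+`:
`H(α,β) = min_{σ ∈ S_l} ∑_j θ(μ_j - ν_{σ(j)})` where `α`, `β` are the step weights of
`Λ_{μ_0} + ⋯ + Λ_{μ_{l-1}}`, `Λ_{ν_0} + ⋯ + Λ_{ν_{l-1}}` with `0 ≤ μ_j, ν_j < n`. -/
noncomputable def Hfun (n : ℕ) (l : ℕ) (d d' : ZMod n → ℤ) : ℕ :=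
  sInf {m | ∃ μ ν : Fin l → ℕ, (∀ j, μ j < n) ∧ (∀ j, ν j < n) ∧
    d = stepWt n (cntF n μ) ∧ d' = stepWt n (cntF n ν) ∧
    m = Finset.univ.inf' ⟨1, Finset.mem_univ 1⟩
      fun σ : Equiv.Perm (Fin l) => ∑ j, theta ((μ j : ℤ) - (ν (σ j) : ℤ))}

/-- `(j, i)` is a removable `r`-node of `λ` (node at the right end of 0-based row `i`
of component `j`). -/
def RemNode (n : ℕ) {l : ℕ} (v : Fin l → ℕ) (lam : Fin l → ℕ → ℕ) (r : ZMod n)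
    (j : Fin l) (i : ℕ) : Prop :=
  1 ≤ lam j i ∧ lam j (i + 1) < lam j i ∧ colour n v j i (lam j i) = r

/-- `(j, i)` is an addable `r`-node of `λ` (node addable at the end of 0-based row `i`
of component `j`). -/
def AddNode (n : ℕ) {l : ℕ} (v : Fin l → ℕ) (lam : Fin l → ℕ → ℕ) (r : ZMod n)
    (j : Fin l) (i : ℕ) : Prop :=
  (i = 0 ∨ lam j i < lam j (i - 1)) ∧ colour n v j i (lam j i + 1) = r

/-- The diagonal number `d = c - (i+1) + v j` of the addable/removable node
`x = (j, i, isRemovable)`. -/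
def nodeD {l : ℕ} (v : Fin l → ℕ) (lam : Fin l → ℕ → ℕ) (x : Fin l × ℕ × Bool) : ℤ :=
  (if x.2.2 then (lam x.1 x.2.1 : ℤ) else (lam x.1 x.2.1 : ℤ) + 1) - ((x.2.1 : ℤ) + 1) + (v x.1 : ℤ)

/-- The total order on addable/removable nodes: `(d,j) < (d',j')` iff `d < d'`, or
`d = d'` and `j > j'`. -/
def nodeLT {l : ℕ} (v : Fin l → ℕ) (lam : Fin l → ℕ → ℕ) (x y : Fin l × ℕ × Bool) : Prop :=
  nodeD v lam x < nodeD v lam y ∨ (nodeD v lam x = nodeD v lam y ∧ (y.1 : ℕ) < (x.1 : ℕ))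

/-- `L` is the `r`-signature of `λ`: the increasing list of all addable and removable
`r`-nodes (flag `true` = removable, `false` = addable). -/
def IsSig (n : ℕ) {l : ℕ} (v : Fin l → ℕ) (lam : Fin l → ℕ → ℕ) (r : ZMod n)
    (L : List (Fin l × ℕ × Bool)) : Prop :=
  L.Pairwise (nodeLT v lam) ∧
  ∀ x : Fin l × ℕ × Bool, x ∈ L ↔
    ((x.2.2 = true ∧ RemNode n v lam r x.1 x.2.1) ∨
      (x.2.2 = false ∧ AddNode n v lam r x.1 x.2.1))

/-- One step of the reduction procedure on signature words: delete an adjacent pair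
consisting of a removable node (`true`) immediately followed by an addable node (`false`). -/
inductive SigStep : List Bool → List Bool → Prop
  | pair (l₁ l₂ : List Bool) : SigStep (l₁ ++ true :: false :: l₂) (l₁ ++ l₂)



section AuxSec
open Finset

-- sum over ZMod n equals sum over range n
lemma sum_zmod {n : ℕ} [NeZero n] (f : ZMod n → ℕ) :
    ∑ i : ZMod n, f i = ∑ y ∈ Finset.range n, f (y : ZMod n) := by
  exact Finset.sum_nbij' (s := Finset.univ) (t := Finset.range n)
    (f := f) (g := fun y => f ((y : ℕ) : ZMod n))
    (fun i => (ZMod.val i : ℕ)) (fun y => ((y : ℕ) : ZMod n))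
    (fun i _ => Finset.mem_range.2 (ZMod.val_lt i))
    (fun y _ => Finset.mem_univ _)
    (fun i _ => ZMod.natCast_rightInverse i)
    (fun y hy => ZMod.val_cast_of_lt (Finset.mem_range.1 hy))
    (fun i _ => by simp [ZMod.natCast_rightInverse i])

lemma stepWt_inj {n : ℕ} [NeZero n] {e e' : ZMod n → ℕ}
    (hsum : ∑ i, e i = ∑ i, e' i) (hstep : stepWt n e = stepWt n e') : e = e' := by
  have key : ∀ i : ZMod n, (e i : ℤ) - e' i = (e 0 : ℤ) - e' 0 := by
    have step : ∀ i : ZMod n, (e i : ℤ) - e' i = (e (i+1) : ℤ) - e' (i+1) := by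
      intro i
      have := congrFun hstep (i + 1)
      simp only [stepWt, add_sub_cancel_right] at this
      linarith
    have all : ∀ k : ℕ, (e (k : ZMod n) : ℤ) - e' (k : ZMod n) = (e 0 : ℤ) - e' 0 := by
      intro k
      induction k with
      | zero => simp
      | succ m ih => push_cast; rw [← step (m : ZMod n)]; exact_mod_cast ih
    intro i
    have : ((ZMod.val i : ℕ) : ZMod n) = i := ZMod.natCast_rightInverse i
    rw [← this]; exact all _
  have hs : ∑ i : ZMod n, ((e i : ℤ) - e' i) = 0 := by
    rw [Finset.sum_sub_distrib]
    have h1 : ∑ i : ZMod n, (e i : ℤ) = ((∑ i : ZMod n, e i : ℕ) : ℤ) := by push_cast; rfl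
    have h2 : ∑ i : ZMod n, (e' i : ℤ) = ((∑ i : ZMod n, e' i : ℕ) : ℤ) := by push_cast; rfl
    rw [h1, h2, hsum, sub_self]
  have hn0 : (0:ℤ) < (n:ℤ) := by exact_mod_cast Nat.pos_of_ne_zero (NeZero.ne n)
  have hcard : (Finset.univ : Finset (ZMod n)).card = n := by
    simpa using ZMod.card n
  have : (n : ℤ) * ((e 0 : ℤ) - e' 0) = 0 := by
    calc (n : ℤ) * ((e 0 : ℤ) - e' 0) = ∑ _i : ZMod n, ((e 0 : ℤ) - e' 0) := by
          rw [Finset.sum_const, hcard, nsmul_eq_mul]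
      _ = ∑ i : ZMod n, ((e i : ℤ) - e' i) := by
          exact Finset.sum_congr rfl fun i _ => (key i).symm
      _ = 0 := hs
  have h0 : (e 0 : ℤ) - e' 0 = 0 := by
    rcases mul_eq_zero.1 this with h | h
    · exact absurd h (ne_of_gt hn0)
    · exact h
  funext i
  have := key i
  rw [h0] at this
  have : (e i : ℤ) = e' i := by linarith
  exact_mod_cast this


namespace Aux



lemma ncard_Iic (a : ℕ) : (Set.Iic a).ncard = a + 1 := by
  rw [← Finset.coe_Iic, Set.ncard_coe_finset, Nat.card_Iic]

lemma ncard_Iio (a : ℕ) : (Set.Iio a).ncard = a := by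
  rw [← Finset.coe_Iio, Set.ncard_coe_finset, Nat.card_Iio]

lemma colHt_iff {g : ℕ → ℕ} (hg : Antitone g) {N : ℕ} (hN : ∀ i ≥ N, g i = 0)
    {m : ℕ} (hm : 1 ≤ m) (i : ℕ) : i < colHt g m ↔ m ≤ g i := by
  have hsub : {i | m ≤ g i} ⊆ Set.Iio N := by
    intro x hx
    simp only [Set.mem_setOf_eq] at hx
    by_contra hxN
    have := hN x (le_of_not_gt hxN)
    omega
  have hfin : {i | m ≤ g i}.Finite := Set.Finite.subset (Set.finite_Iio N) hsub
  have hcol : colHt g m = {i | m ≤ g i}.ncard := Nat.card_coe_set_eq _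
  constructor
  · intro h
    by_contra hgi
    have hsub2 : {i' | m ≤ g i'} ⊆ Set.Iio i := by
      intro x hx
      simp only [Set.mem_setOf_eq] at hx
      by_contra hxi
      have := hg (le_of_not_gt hxi)
      omega
    have := Set.ncard_le_ncard hsub2 (Set.finite_Iio i)
    rw [ncard_Iio] at this
    omega
  · intro h
    have hsub2 : Set.Iic i ⊆ {i' | m ≤ g i'} := by
      intro x hx
      simp only [Set.mem_Iic] at hx
      have := hg hx
      simp only [Set.mem_setOf_eq]
      omega
    have := Set.ncard_le_ncard hsub2 hfin
    rw [ncard_Iic] at this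
    omega

lemma colHt_anti {g : ℕ → ℕ} {N : ℕ} (hN : ∀ i ≥ N, g i = 0)
    {m m' : ℕ} (hm : 1 ≤ m) (hmm : m ≤ m') : colHt g m' ≤ colHt g m := by
  have h1 : colHt g m = {i | m ≤ g i}.ncard := Nat.card_coe_set_eq _
  have h2 : colHt g m' = {i | m' ≤ g i}.ncard := Nat.card_coe_set_eq _
  have hsub : {i | m ≤ g i} ⊆ Set.Iio N := by
    intro x hx; simp only [Set.mem_setOf_eq] at hx
    by_contra hxN
    have := hN x (le_of_not_gt hxN); omega
  have hfin : {i | m ≤ g i}.Finite := Set.Finite.subset (Set.finite_Iio N) hsub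
  rw [h1, h2]
  exact Set.ncard_le_ncard (fun x hx => by simp only [Set.mem_setOf_eq] at *; omega) hfin

/-- the partition built from a (weakly decreasing, finitely supported) sequence of
column heights, together with its basic properties. -/
def lamOf (cseq : ℕ → ℕ) (N : ℕ) : ℕ → ℕ :=
  fun i => ((Finset.range N).filter (fun m => i < cseq m)).card

lemma lamOf_mono (cseq : ℕ → ℕ) (N : ℕ) (i : ℕ) : lamOf cseq N (i + 1) ≤ lamOf cseq N i :=
  Finset.card_le_card (fun m hm => by
    simp only [lamOf, Finset.mem_filter, Finset.mem_range] at *; omega)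

lemma lamOf_zero (cseq : ℕ → ℕ) (N : ℕ) {i : ℕ} (hi : cseq 0 ≤ i) (hanti : Antitone cseq) :
    lamOf cseq N i = 0 := by
  rw [lamOf, Finset.card_eq_zero, Finset.filter_eq_empty_iff]
  intro m _
  have := hanti (Nat.zero_le m)
  omega

lemma lamOf_le_iff {cseq : ℕ → ℕ} (hanti : Antitone cseq) {N : ℕ}
    (hN : ∀ m ≥ N, cseq m = 0) (m i : ℕ) :
    m + 1 ≤ lamOf cseq N i ↔ i < cseq m := by
  constructor
  · intro h
    by_contra hle
    have hsub : (Finset.range N).filter (fun m' => i < cseq m') ⊆ Finset.range m := by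
      intro m' hm'
      simp only [Finset.mem_filter, Finset.mem_range] at *
      by_contra hge
      have := hanti (le_of_not_gt (by omega : ¬ m' < m))
      omega
    have := Finset.card_le_card hsub
    rw [Finset.card_range] at this
    rw [lamOf] at h
    omega
  · intro h
    have hmN : m < N := by
      by_contra hge
      have := hN m (le_of_not_gt hge); omega
    have hsub : Finset.Iic m ⊆ (Finset.range N).filter (fun m' => i < cseq m') := by
      intro m' hm'
      simp only [Finset.mem_Iic] at hm'
      simp only [Finset.mem_filter, Finset.mem_range]
      have := hanti hm'
      constructor
      · omega
      · omega
    have := Finset.card_le_card hsub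
    rw [Nat.card_Iic] at this
    rw [lamOf]
    omega

lemma colHt_lamOf {cseq : ℕ → ℕ} (hanti : Antitone cseq) {N : ℕ}
    (hN : ∀ m ≥ N, cseq m = 0) (m : ℕ) : colHt (lamOf cseq N) (m + 1) = cseq m := by
  have key : ∀ i, i < colHt (lamOf cseq N) (m + 1) ↔ i < cseq m := by
    intro i
    rw [colHt_iff (g := lamOf cseq N) (antitone_nat_of_succ_le (lamOf_mono cseq N))
      (N := cseq 0) (fun i hi => lamOf_zero cseq N hi hanti) (by omega)]
    exact lamOf_le_iff hanti hN m i
  have h1 := key (colHt (lamOf cseq N) (m + 1))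
  have h2 := key (cseq m)
  omega




variable {n l : ℕ}

/-- cumulative sums of `F` along `1, 2, …` -/
def Sfun (n : ℕ) (F : ZMod n → ℕ) (r : ℕ) : ℕ := ∑ y ∈ Finset.range r, F ((y + 1 : ℕ) : ZMod n)

lemma sum_zmod' [NeZero n] (f : ZMod n → ℕ) :
    ∑ i : ZMod n, f i = ∑ y ∈ Finset.range n, f (y : ZMod n) := BF.sum_zmod f

lemma Sfun_top [NeZero n] {F : ZMod n → ℕ} (hF : ∑ i, F i = l) : Sfun n F n = l := by
  have h1 : Sfun n F n = ∑ y ∈ Finset.range n, (fun i => F (i + 1)) ((y : ℕ) : ZMod n) := by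
    unfold Sfun
    refine Finset.sum_congr rfl fun y _ => ?_
    push_cast
    rfl
  rw [h1, ← sum_zmod' (fun i => F (i + 1))]
  rw [← hF]
  exact Fintype.sum_equiv (Equiv.addRight (1 : ZMod n)) _ _ (fun i => rfl)

/-- the counting function: `Phi x` = number of beads `≤ x` (normalised so `Phi 0 = 0`). -/
def Phi (n l : ℕ) (F : ZMod n → ℕ) (x : ℤ) : ℤ := l * (x / n) + Sfun n F (x % n).toNat

lemma Phi_eval [NeZero n] (F : ZMod n → ℕ) {x q r : ℤ} (hx : x = n * q + r)
    (hr0 : 0 ≤ r) (hrn : r < n) : Phi n l F x = l * q + Sfun n F r.toNat := by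
  have hn : 0 < (n : ℤ) := by exact_mod_cast Nat.pos_of_ne_zero (NeZero.ne n)
  have hx' : x = r + q * n := by rw [hx]; ring
  unfold Phi
  rw [hx', Int.add_mul_ediv_right _ _ hn.ne', Int.ediv_eq_zero_of_lt hr0 hrn, zero_add,
    Int.add_mul_emod_self_right, Int.emod_eq_of_lt hr0 hrn]

lemma intCast_zmod_eq [NeZero n] {x y : ℤ} (h : ((n : ℤ)) ∣ x - y) :
    ((x : ℤ) : ZMod n) = ((y : ℤ) : ZMod n) := by
  rw [ZMod.intCast_eq_intCast_iff]
  exact Int.ModEq.symm (Int.modEq_iff_dvd.2 h)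

lemma Phi_succ [NeZero n] {F : ZMod n → ℕ} (hF : ∑ i, F i = l) (x : ℤ) :
    Phi n l F x = Phi n l F (x - 1) + F ((x : ℤ) : ZMod n) := by
  have hn : 0 < (n : ℤ) := by exact_mod_cast Nat.pos_of_ne_zero (NeZero.ne n)
  have hq : (n : ℤ) * (x / n) + x % n = x := Int.mul_ediv_add_emod x n
  have hr0 : 0 ≤ x % n := Int.emod_nonneg x hn.ne'
  have hrn : x % n < n := Int.emod_lt_of_pos x hn
  by_cases h0 : x % n = 0
  · have h1 : Phi n l F x = l * (x / n) + Sfun n F ((0:ℤ)).toNat :=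
      Phi_eval F (by omega) le_rfl hn
    have h2 : Phi n l F (x - 1) = l * (x / n - 1) + Sfun n F ((n : ℤ) - 1).toNat :=
      Phi_eval F (by rw [mul_sub]; omega) (by omega) (by omega)
    have hcast : ((x : ℤ) : ZMod n) = ((((n : ℤ) - 1).toNat + 1 : ℕ) : ZMod n) := by
      have hnn : ((((n : ℤ) - 1).toNat + 1 : ℕ) : ℤ) = (n : ℤ) := by omega
      have hbr : ((((n : ℤ) - 1).toNat + 1 : ℕ) : ZMod n)
          = ((((((n : ℤ) - 1).toNat + 1 : ℕ) : ℤ)) : ZMod n) := by push_cast; rfl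
      rw [hbr]
      apply intCast_zmod_eq
      rw [hnn]
      have : x - (n:ℤ) = (n:ℤ) * (x / n - 1) := by rw [mul_sub]; omega
      rw [this]
      exact Dvd.intro _ rfl
    have hSn : Sfun n F (((n : ℤ) - 1).toNat + 1) = l := by
      have hn1 : ((n : ℤ) - 1).toNat + 1 = n := by omega
      rw [hn1]
      exact Sfun_top hF
    have hstep : Sfun n F (((n : ℤ) - 1).toNat + 1)
        = Sfun n F (((n : ℤ) - 1).toNat) + F ((((n : ℤ) - 1).toNat + 1 : ℕ) : ZMod n) := by
      rw [Sfun, Finset.sum_range_succ]; rfl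
    have hSn' : ((Sfun n F (((n : ℤ) - 1).toNat) : ℤ))
        + (F ((x : ℤ) : ZMod n) : ℤ) = (l : ℤ) := by
      rw [hcast]
      exact_mod_cast (hstep ▸ hSn)
    have hS0 : Sfun n F ((0:ℤ)).toNat = 0 := by simp [Sfun]
    rw [h1, h2, hS0]
    push_cast
    linear_combination -hSn'
  · have hr1 : 1 ≤ x % n := by omega
    have h1 : Phi n l F x = l * (x / n) + Sfun n F (x % n).toNat :=
      Phi_eval F (by omega) hr0 hrn
    have h2 : Phi n l F (x - 1) = l * (x / n) + Sfun n F ((x % n) - 1).toNat :=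
      Phi_eval F (by omega) (by omega) (by omega)
    have hcast : ((x : ℤ) : ZMod n) = (((((x % n) - 1).toNat + 1 : ℕ)) : ZMod n) := by
      have hnn : (((((x % n) - 1).toNat + 1 : ℕ)) : ℤ) = x % n := by omega
      have hbr : (((((x % n) - 1).toNat + 1 : ℕ)) : ZMod n)
          = ((((((x % n) - 1).toNat + 1 : ℕ)) : ℤ) : ZMod n) := by push_cast; rfl
      rw [hbr]
      apply intCast_zmod_eq
      rw [hnn]
      have : x - x % n = (n:ℤ) * (x / n) := by omega
      rw [this]
      exact Dvd.intro _ rfl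
    have hstep : Sfun n F (((x % n) - 1).toNat + 1)
        = Sfun n F (((x % n) - 1).toNat) + F ((((x % n) - 1).toNat + 1 : ℕ) : ZMod n) := by
      rw [Sfun, Finset.sum_range_succ]; rfl
    have htn : ((x % n) - 1).toNat + 1 = (x % n).toNat := by omega
    rw [h1, h2, hcast, ← htn, hstep]
    push_cast
    ring

lemma Phi_mono [NeZero n] {F : ZMod n → ℕ} (hF : ∑ i, F i = l) : Monotone (Phi n l F) := by
  apply monotone_int_of_le_succ
  intro x
  have := Phi_succ hF (x + 1)
  simp only [add_sub_cancel_right] at this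
  rw [this]
  exact le_add_of_nonneg_right (by positivity)

lemma Phi_add_n [NeZero n] (F : ZMod n → ℕ) (x : ℤ) :
    Phi n l F (x + n) = Phi n l F x + l := by
  have hn : 0 < (n : ℤ) := by exact_mod_cast Nat.pos_of_ne_zero (NeZero.ne n)
  unfold Phi
  have h1 : (x + n) / n = x / n + 1 := by
    have : (x + (n : ℤ)) = x + 1 * n := by ring
    rw [this, Int.add_mul_ediv_right _ _ hn.ne']
  have h2 : (x + (n : ℤ)) % n = x % n := by
    have : (x + (n : ℤ)) = x + 1 * n := by ring
    rw [this, Int.add_mul_emod_self_right]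
  rw [h1, h2]
  ring

lemma Phi_mul [NeZero n] (F : ZMod n → ℕ) (m : ℤ) : Phi n l F ((n : ℤ) * m) = l * m := by
  have hn : 0 < (n : ℤ) := by exact_mod_cast Nat.pos_of_ne_zero (NeZero.ne n)
  unfold Phi
  rw [Int.mul_ediv_cancel_left _ hn.ne', Int.mul_emod_right]
  simp [Sfun]

lemma Phi_zero [NeZero n] (F : ZMod n → ℕ) : Phi n l F 0 = 0 := by
  have := Phi_mul (n := n) (l := l) F 0
  simpa using this

-- the position of the `c`-th bead: least `x` with `c ≤ Phi x`.
open Classical in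
noncomputable def minx (n l : ℕ) (F : ZMod n → ℕ) (c : ℤ) : ℤ :=
  if h : ∃ x : ℤ, (c ≤ Phi n l F x ∧ ∀ y, c ≤ Phi n l F y → x ≤ y) then h.choose else 0

lemma minx_exists [NeZero n] (hl : 0 < l) {F : ZMod n → ℕ} (hF : ∑ i, F i = l) (c : ℤ) :
    ∃ x : ℤ, (c ≤ Phi n l F x ∧ ∀ y, c ≤ Phi n l F y → x ≤ y) := by
  have hn : 0 < (n : ℤ) := by exact_mod_cast Nat.pos_of_ne_zero (NeZero.ne n)
  have hl' : 1 ≤ (l : ℤ) := by exact_mod_cast hl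
  have hinh : ∃ x : ℤ, c ≤ Phi n l F x := by
    refine ⟨n * max c 0, ?_⟩
    rw [Phi_mul]
    calc c ≤ max c 0 := le_max_left _ _
      _ ≤ l * max c 0 := le_mul_of_one_le_left (le_max_right _ _) hl'
  have hbdd : ∃ b : ℤ, ∀ z : ℤ, c ≤ Phi n l F z → b ≤ z := by
    refine ⟨n * min (c - 1) 0 + 1, ?_⟩
    intro z hz
    by_contra hlt
    push_neg at hlt
    have hzle : z ≤ n * min (c - 1) 0 := by omega
    have h1 : Phi n l F z ≤ Phi n l F (n * min (c - 1) 0) := Phi_mono hF hzle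
    rw [Phi_mul] at h1
    have h2 : (l : ℤ) * min (c - 1) 0 ≤ 1 * min (c - 1) 0 :=
      mul_le_mul_of_nonpos_right hl' (by omega)
    omega
  obtain ⟨lb, hlb, hmin⟩ := Int.exists_least_of_bdd hbdd hinh
  exact ⟨lb, hlb, hmin⟩

lemma minx_spec [NeZero n] (hl : 0 < l) {F : ZMod n → ℕ} (hF : ∑ i, F i = l) (c : ℤ) :
    c ≤ Phi n l F (minx n l F c) ∧ ∀ y, c ≤ Phi n l F y → minx n l F c ≤ y := by
  have h := minx_exists hl hF c
  unfold minx
  rw [dif_pos h]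
  exact h.choose_spec

lemma minx_le_iff [NeZero n] (hl : 0 < l) {F : ZMod n → ℕ} (hF : ∑ i, F i = l)
    {c x : ℤ} : minx n l F c ≤ x ↔ c ≤ Phi n l F x := by
  constructor
  · intro h
    exact le_trans (minx_spec hl hF c).1 (Phi_mono hF h)
  · intro h
    exact (minx_spec hl hF c).2 x h

lemma minx_mono [NeZero n] (hl : 0 < l) {F : ZMod n → ℕ} (hF : ∑ i, F i = l)
    {c c' : ℤ} (h : c ≤ c') : minx n l F c ≤ minx n l F c' := by
  rw [minx_le_iff hl hF]
  exact le_trans h (minx_spec hl hF c').1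

lemma minx_shift [NeZero n] (hl : 0 < l) {F : ZMod n → ℕ} (hF : ∑ i, F i = l)
    (c : ℤ) : minx n l F (c + l) = minx n l F c + n := by
  apply le_antisymm
  · rw [minx_le_iff hl hF, Phi_add_n]
    have := (minx_spec hl hF c).1
    omega
  · have h1 : c ≤ Phi n l F (minx n l F (c + l) - n) := by
      have h2 := (minx_spec hl hF (c + l)).1
      have h3 : Phi n l F ((minx n l F (c + l) - n) + n) = Phi n l F (minx n l F (c + l) - n) + l :=
        Phi_add_n F _
      simp only [sub_add_cancel] at h3
      omega
    have := (minx_spec hl hF c).2 _ h1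
    omega

lemma minx_eq_iff [NeZero n] (hl : 0 < l) {F : ZMod n → ℕ} (hF : ∑ i, F i = l)
    {c x : ℤ} : minx n l F c = x ↔ (c ≤ Phi n l F x ∧ Phi n l F (x - 1) < c) := by
  constructor
  · intro h
    subst h
    refine ⟨(minx_spec hl hF c).1, ?_⟩
    by_contra hge
    push_neg at hge
    have := (minx_spec hl hF c).2 _ hge
    omega
  · rintro ⟨h1, h2⟩
    have hle : minx n l F c ≤ x := (minx_spec hl hF c).2 x h1
    have hge : ¬ (minx n l F c ≤ x - 1) := by
      rw [minx_le_iff hl hF]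
      omega
    omega

section Count

variable [NeZero n] {F : ZMod n → ℕ}

/-- number of `j < l` with `minx (a + j + 1) ≡ i (mod n)`. -/
noncomputable def mcount (n l : ℕ) (F : ZMod n → ℕ) (a : ℤ) (i : ZMod n) : ℕ :=
  ∑ j ∈ Finset.range l, (if ((minx n l F (a + j + 1) : ℤ) : ZMod n) = i then 1 else 0)

lemma mcount_step (hl : 0 < l) (hF : ∑ i, F i = l) (a : ℤ) (i : ZMod n) :
    mcount n l F (a + 1) i = mcount n l F a i := by
  set f : ℕ → ℕ := fun j => if ((minx n l F (a + j + 1) : ℤ) : ZMod n) = i then 1 else 0 with hf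
  have hLHS : mcount n l F (a + 1) i = ∑ j ∈ Finset.range l, f (j + 1) := by
    unfold mcount
    refine Finset.sum_congr rfl fun j _ => ?_
    rw [hf]
    have : a + 1 + (j : ℤ) + 1 = a + ((j + 1 : ℕ) : ℤ) + 1 := by push_cast; ring
    rw [this]
  have hfl0 : f l = f 0 := by
    rw [hf]
    have h1 : a + (l : ℤ) + 1 = (a + (0 : ℕ) + 1) + l := by push_cast; ring
    simp only []
    rw [h1, minx_shift hl hF]
    have : ((((minx n l F (a + (0:ℕ) + 1)) + (n:ℤ)) : ℤ) : ZMod n)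
        = (((minx n l F (a + (0:ℕ) + 1)) : ℤ) : ZMod n) := by
      push_cast [ZMod.natCast_self]
      ring
    rw [this]
  have e1 : ∑ j ∈ Finset.range (l + 1), f j = (∑ j ∈ Finset.range l, f (j + 1)) + f 0 :=
    Finset.sum_range_succ' f l
  have e2 : ∑ j ∈ Finset.range (l + 1), f j = (∑ j ∈ Finset.range l, f j) + f l :=
    Finset.sum_range_succ f l
  have : mcount n l F a i = ∑ j ∈ Finset.range l, f j := rfl
  rw [hLHS, this]
  omega

lemma mcount_zero (hl : 0 < l) (hF : ∑ i, F i = l) (i : ZMod n) :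
    mcount n l F 0 i = F i := by
  classical
  have hn : 0 < (n : ℤ) := by exact_mod_cast Nat.pos_of_ne_zero (NeZero.ne n)
  have hPhi0 : Phi n l F 0 = 0 := Phi_zero F
  have hPhin : Phi n l F n = l := by
    have := Phi_add_n (l := l) F 0
    simp only [zero_add] at this
    rw [this, hPhi0, zero_add]
  -- each term expands over x ∈ Icc 1 n
  have hterm : ∀ j ∈ Finset.range l,
      (if ((minx n l F (0 + j + 1) : ℤ) : ZMod n) = i then 1 else 0)
      = ∑ x ∈ Finset.Icc (1:ℤ) n,
          (if (minx n l F ((j : ℤ) + 1) = x ∧ ((x : ℤ) : ZMod n) = i) then 1 else 0) := by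
    intro j hj
    rw [Finset.mem_range] at hj
    have hmem : minx n l F ((j : ℤ) + 1) ∈ Finset.Icc (1:ℤ) n := by
      rw [Finset.mem_Icc]
      constructor
      · by_contra hlt
        push_neg at hlt
        have : minx n l F ((j : ℤ) + 1) ≤ 0 := by omega
        rw [minx_le_iff hl hF, hPhi0] at this
        omega
      · rw [minx_le_iff hl hF, hPhin]
        omega
    rw [Finset.sum_eq_single (minx n l F ((j : ℤ) + 1))
      (fun b _ hb => by rw [if_neg]; tauto)
      (fun habs => absurd hmem habs)]
    simp only [zero_add]
    by_cases hcast : ((minx n l F ((j:ℤ) + 1) : ℤ) : ZMod n) = i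
    · simp [hcast]
    · simp [hcast]
  unfold mcount
  rw [Finset.sum_congr rfl hterm, Finset.sum_comm]
  -- inner count over j
  have hinner : ∀ x ∈ Finset.Icc (1:ℤ) n,
      (∑ j ∈ Finset.range l,
        if (minx n l F ((j : ℤ) + 1) = x ∧ ((x : ℤ) : ZMod n) = i) then 1 else 0)
      = (if ((x : ℤ) : ZMod n) = i then F ((x : ℤ) : ZMod n) else 0) := by
    intro x hx
    rw [Finset.mem_Icc] at hx
    have hP1 : 0 ≤ Phi n l F (x - 1) := by
      have := Phi_mono hF (by omega : (0:ℤ) ≤ x - 1)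
      omega
    have hP2 : Phi n l F x ≤ l := by
      have := Phi_mono hF hx.2
      omega
    have hPmono : Phi n l F (x - 1) ≤ Phi n l F x := Phi_mono hF (by omega)
    have hFx : (F ((x : ℤ) : ZMod n) : ℤ) = Phi n l F x - Phi n l F (x - 1) := by
      have := Phi_succ hF x
      omega
    by_cases hcast : ((x : ℤ) : ZMod n) = i
    · rw [if_pos hcast]
      have : ∀ j ∈ Finset.range l,
          (if (minx n l F ((j : ℤ) + 1) = x ∧ ((x : ℤ) : ZMod n) = i) then 1 else 0)
          = (if (Phi n l F (x-1) ≤ (j:ℤ) ∧ (j:ℤ) < Phi n l F x) then 1 else 0) := by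
        intro j _
        congr 1
        rw [eq_iff_iff]
        constructor
        · rintro ⟨hm, -⟩
          rw [minx_eq_iff hl hF] at hm
          refine ⟨by omega, by omega⟩
        · intro hm
          refine ⟨?_, hcast⟩
          rw [minx_eq_iff hl hF]
          refine ⟨by omega, by omega⟩
      rw [Finset.sum_congr rfl this, ← Finset.card_filter]
      have hset : (Finset.range l).filter (fun j : ℕ => Phi n l F (x-1) ≤ (j:ℤ) ∧ (j:ℤ) < Phi n l F x)
          = Finset.Ico (Phi n l F (x-1)).toNat (Phi n l F x).toNat := by
        ext j
        simp only [Finset.mem_filter, Finset.mem_range, Finset.mem_Ico]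
        omega
      rw [hset, Nat.card_Ico]
      omega
    · rw [if_neg hcast]
      rw [Finset.sum_eq_zero]
      intro j _
      rw [if_neg (by tauto)]
  rw [Finset.sum_congr rfl hinner]
  -- the unique x ∈ [1, n] in the class of i
  have hx0 : ∃ x0 : ℤ, (Finset.Icc (1:ℤ) n).filter (fun x => ((x : ℤ) : ZMod n) = i) = {x0} := by
    refine ⟨if (ZMod.val i : ℕ) = 0 then (n : ℤ) else (ZMod.val i : ℤ), ?_⟩
    have hival : (ZMod.val i : ℕ) < n := ZMod.val_lt i
    ext x
    simp only [Finset.mem_filter, Finset.mem_Icc, Finset.mem_singleton]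
    constructor
    · rintro ⟨⟨hx1, hx2⟩, hcast⟩
      set x0 : ℤ := if (ZMod.val i : ℕ) = 0 then (n : ℤ) else (ZMod.val i : ℤ) with hx0def
      have hx01 : 1 ≤ x0 ∧ x0 ≤ n := by
        rw [hx0def]
        split <;> omega
      have hcast0 : ((x0 : ℤ) : ZMod n) = i := by
        rw [hx0def]
        split
        · rename_i h0
          have : ((n:ℤ) : ZMod n) = 0 := by push_cast [ZMod.natCast_self]; rfl
          rw [this]
          have := ZMod.natCast_rightInverse (n := n) i
          rw [← this, h0]
          simp
        · have := ZMod.natCast_rightInverse (n := n) i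
          push_cast
          rw [this]
      have hmod : x ≡ x0 [ZMOD n] := by
        rw [← ZMod.intCast_eq_intCast_iff]
        rw [hcast, hcast0]
      obtain ⟨k, hk⟩ := Int.ModEq.dvd hmod
      -- x0 - x = n * k, both in [1, n]
      have hbnd : -(n:ℤ) < x0 - x ∧ x0 - x < n := by omega
      have hk0 : k = 0 := by
        by_contra hkne
        rcases lt_or_gt_of_ne hkne with hneg | hpos
        · have : (n:ℤ) * k ≤ -n := by nlinarith
          omega
        · have : (n:ℤ) ≤ n * k := by nlinarith
          omega
      rw [hk0, mul_zero] at hk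
      omega
    · intro hx
      subst hx
      have hival0 : ((ZMod.val i : ℕ) : ZMod n) = i := ZMod.natCast_rightInverse i
      split
      · rename_i h0
        refine ⟨⟨by omega, le_rfl⟩, ?_⟩
        have : ((n:ℤ) : ZMod n) = 0 := by push_cast [ZMod.natCast_self]; rfl
        rw [this, ← hival0, h0]
        simp
      · rename_i h0
        refine ⟨⟨by omega, by omega⟩, ?_⟩
        push_cast
        rw [hival0]
  obtain ⟨x0, hx0⟩ := hx0
  have hrepl : ∀ x ∈ Finset.Icc (1:ℤ) n,
      (if ((x : ℤ) : ZMod n) = i then F ((x : ℤ) : ZMod n) else 0)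
      = (if ((x : ℤ) : ZMod n) = i then F i else 0) := by
    intro x _
    by_cases h : ((x : ℤ) : ZMod n) = i
    · simp [h]
    · simp [h]
  rw [Finset.sum_congr rfl hrepl, ← Finset.sum_filter, hx0, Finset.sum_singleton]

lemma mcount_eq (hl : 0 < l) (hF : ∑ i, F i = l) (a : ℤ) (i : ZMod n) :
    mcount n l F a i = F i := by
  induction a using Int.induction_on with
  | zero => exact mcount_zero hl hF i
  | succ k ih => rw [mcount_step hl hF]; exact ih
  | pred k ih =>
    have h := mcount_step hl hF (-(k:ℤ) - 1) i
    rw [show (-(k:ℤ) - 1) + 1 = -(k:ℤ) by ring] at h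
    rw [← h]
    exact ih

end Count

section Block

variable [NeZero n] {F : ZMod n → ℕ}

/-- a sorted level-`l` window with residue multiset `F`. -/
def IsBlk (n l : ℕ) (F : ZMod n → ℕ) (b : Fin l → ℤ) : Prop :=
  Monotone b ∧ (∀ j j' : Fin l, b j' ≤ b j + n) ∧
  ∀ i : ZMod n, (Finset.univ.filter fun j : Fin l => ((b j : ℤ) : ZMod n) = i).card = F i

lemma blkOf_isBlk (hl : 0 < l) (hF : ∑ i, F i = l) (t : ℤ) :
    IsBlk n l F (fun j : Fin l => minx n l F (((j:ℕ):ℤ) + 1 - t)) := by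
  refine ⟨?_, ?_, ?_⟩
  · intro j j' hjj
    exact minx_mono hl hF (by have : (j:ℕ) ≤ (j':ℕ) := hjj; omega)
  · intro j j'
    show minx n l F (((j':ℕ):ℤ) + 1 - t) ≤ minx n l F (((j:ℕ):ℤ) + 1 - t) + n
    have h1 : minx n l F (((j':ℕ):ℤ) + 1 - t) ≤ minx n l F ((1 - t) + l) := by
      apply minx_mono hl hF
      have : (j':ℕ) < l := j'.isLt
      omega
    rw [minx_shift hl hF] at h1
    have h2 : minx n l F (1 - t) ≤ minx n l F (((j:ℕ):ℤ) + 1 - t) := by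
      apply minx_mono hl hF
      have : (0:ℤ) ≤ ((j:ℕ):ℤ) := by positivity
      omega
    omega
  · intro i
    have hm := mcount_eq hl hF (-t) i
    unfold mcount at hm
    rw [← hm, Finset.card_filter]
    rw [Fin.sum_univ_eq_sum_range
      (fun j => if ((minx n l F ((j:ℤ) + 1 - t) : ℤ) : ZMod n) = i then 1 else 0) l]
    refine Finset.sum_congr rfl fun j _ => ?_
    rw [show (-t + (j:ℤ) + 1) = ((j:ℤ) + 1 - t) by ring]

theorem isBlk_eq_blkOf (hl : 0 < l) (hF : ∑ i, F i = l) {b : Fin l → ℤ}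
    (hb : IsBlk n l F b) :
    ∃ t : ℤ, ∀ j : Fin l, b j = minx n l F (((j:ℕ):ℤ) + 1 - t) := by
  classical
  obtain ⟨hmono, hwin, hres⟩ := hb
  have hn : 0 < (n : ℤ) := by exact_mod_cast Nat.pos_of_ne_zero (NeZero.ne n)
  set j0 : Fin l := ⟨0, hl⟩ with hj0
  set b0 : ℤ := b j0 with hb0
  set C : ℤ → ℤ := fun x => ((Finset.univ.filter fun j : Fin l => b j ≤ x).card : ℤ) with hC
  set t : ℤ := C b0 - Phi n l F b0 with ht
  have hCx : ∀ x, C x = ((Finset.univ.filter fun j : Fin l => b j ≤ x).card : ℤ) :=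
    fun _ => rfl
  have hCm : ∀ x, 0 ≤ C x ∧ C x ≤ l := by
    intro x
    constructor
    · positivity
    · rw [hCx]
      have := Finset.card_filter_le (Finset.univ : Finset (Fin l))
        (fun j : Fin l => b j ≤ x)
      simp only [Finset.card_univ, Fintype.card_fin] at this
      exact_mod_cast this
  have hlow : ∀ j : Fin l, b0 ≤ b j := fun j => hmono (by simp [hj0, Fin.le_def])
  have hhigh : ∀ j : Fin l, b j ≤ b0 + n := fun j => hwin j0 j
  -- (i)
  have key : ∀ (j : Fin l) (x : ℤ), b j ≤ x ↔ ((j:ℕ):ℤ) + 1 ≤ C x := by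
    intro j x
    constructor
    · intro h
      have hinj : ((Finset.univ : Finset (Fin ((j:ℕ) + 1))).card : ℤ)
          ≤ ((Finset.univ.filter fun j' : Fin l => b j' ≤ x).card : ℤ) := by
        have := Finset.card_le_card_of_injOn
          (f := fun k : Fin ((j:ℕ)+1) => (⟨(k:ℕ), lt_of_lt_of_le k.isLt j.isLt⟩ : Fin l))
          (s := Finset.univ) (t := Finset.univ.filter fun j' : Fin l => b j' ≤ x)
          (fun k _ => by
            rw [Finset.mem_coe, Finset.mem_filter]
            refine ⟨Finset.mem_univ _, le_trans (hmono ?_) h⟩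
            rw [Fin.le_def]
            simp
            omega)
          (fun k1 _ k2 _ hk => by
            have : (k1:ℕ) = (k2:ℕ) := by simpa using congrArg Fin.val hk
            exact Fin.ext this)
        exact_mod_cast this
      simp only [Finset.card_univ, Fintype.card_fin] at hinj
      rw [hCx]
      push_cast at hinj ⊢
      omega
    · intro h
      by_contra hgt
      push_neg at hgt
      have hsub : ((Finset.univ.filter fun j' : Fin l => b j' ≤ x).card : ℤ) ≤ (j:ℕ) := by
        have := Finset.card_le_card_of_injOn (f := fun j' : Fin l => (j':ℕ))
          (s := Finset.univ.filter fun j' : Fin l => b j' ≤ x)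
          (t := Finset.range (j:ℕ))
          (fun j' hj' => by
            rw [Finset.mem_coe, Finset.mem_filter] at hj'
            rw [Finset.mem_coe, Finset.mem_range]
            by_contra hge
            push_neg at hge
            have : j ≤ j' := by rw [Fin.le_def]; omega
            have := hmono this
            omega)
          (fun a _ c _ hac => Fin.ext hac)
        rw [Finset.card_range] at this
        exact_mod_cast this
      rw [hCx] at h
      omega
  -- boundary values
  have hCb0 : (Finset.univ.filter fun j : Fin l => b j ≤ b0)
      = (Finset.univ.filter fun j : Fin l => b j = b0) := by
    ext j
    simp only [Finset.mem_filter, Finset.mem_univ, true_and]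
    have := hlow j
    omega
  have hCb0le : C b0 ≤ F ((b0 : ℤ) : ZMod n) := by
    rw [hCx]
    rw [hCb0, ← hres ((b0 : ℤ) : ZMod n)]
    have : (Finset.univ.filter fun j : Fin l => b j = b0)
        ⊆ (Finset.univ.filter fun j : Fin l => ((b j : ℤ) : ZMod n) = ((b0 : ℤ) : ZMod n)) := by
      intro j hj
      simp only [Finset.mem_filter, Finset.mem_univ, true_and] at *
      rw [hj]
    exact_mod_cast Finset.card_le_card this
  -- fibers have size F in the interior
  have hfiber : ∀ y : ℤ, b0 < y → y ≤ b0 + n - 1 →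
      ((Finset.univ.filter fun j : Fin l => b j = y).card : ℤ) = F ((y : ℤ) : ZMod n) := by
    intro y hy1 hy2
    rw [← hres ((y : ℤ) : ZMod n)]
    have hsets : (Finset.univ.filter fun j : Fin l => b j = y)
        = (Finset.univ.filter fun j : Fin l => ((b j : ℤ) : ZMod n) = ((y : ℤ) : ZMod n)) := by
      ext j
      simp only [Finset.mem_filter, Finset.mem_univ, true_and]
      constructor
      · intro h; rw [h]
      · intro h
        have hmod : b j ≡ y [ZMOD n] := by rw [← ZMod.intCast_eq_intCast_iff]; exact h
        obtain ⟨k, hk⟩ := Int.ModEq.dvd hmod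
        have h1 := hlow j
        have h2 := hhigh j
        have hk0 : k = 0 := by
          by_contra hkne
          rcases lt_or_gt_of_ne hkne with hneg | hpos
          · have : (n:ℤ) * k ≤ -n := by nlinarith
            omega
          · have : (n:ℤ) ≤ (n:ℤ) * k := by nlinarith
            omega
        rw [hk0, mul_zero] at hk
        omega
    rw [hsets]
  -- C in the window
  have hwindow' : ∀ d : ℕ, b0 + (d:ℤ) < b0 + n → C (b0 + (d:ℤ)) = Phi n l F (b0 + (d:ℤ)) + t := by
    intro d
    induction d with
    | zero =>
      intro _
      simp only [Nat.cast_zero, add_zero]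
      rw [ht]; ring
    | succ d ih =>
      intro hxn
      have hc1 : b0 + ((d+1 : ℕ):ℤ) = (b0 + (d:ℤ)) + 1 := by push_cast; ring
      have hdn : ((d:ℤ)) < n := by push_cast at hxn; omega
      have ihx := ih (by omega)
      rw [hc1]
      set x : ℤ := b0 + (d:ℤ) with hxdef
      have hsplit : (Finset.univ.filter fun j : Fin l => b j ≤ x + 1)
          = (Finset.univ.filter fun j : Fin l => b j ≤ x)
            ∪ (Finset.univ.filter fun j : Fin l => b j = x + 1) := by
        ext j
        simp only [Finset.mem_filter, Finset.mem_univ, true_and, Finset.mem_union]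
        omega
      have hdisj : Disjoint (Finset.univ.filter fun j : Fin l => b j ≤ x)
          (Finset.univ.filter fun j : Fin l => b j = x + 1) := by
        rw [Finset.disjoint_left]
        intro j hj1 hj2
        simp only [Finset.mem_filter, Finset.mem_univ, true_and] at *
        omega
      have hCx1 : C (x + 1) = C x
          + ((Finset.univ.filter fun j : Fin l => b j = x + 1).card : ℤ) := by
        rw [hCx, hCx]
        rw [hsplit, Finset.card_union_of_disjoint hdisj]
        push_cast
        ring
      rw [hCx1, ihx, hfiber (x+1) (by omega) (by push_cast; omega)]
      have := Phi_succ hF (x + 1)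
      simp only [add_sub_cancel_right] at this
      omega
  have hwindow : ∀ x : ℤ, b0 ≤ x → x < b0 + n → C x = Phi n l F x + t := by
    intro x hx1 hx2
    have hd : x = b0 + (((x - b0).toNat : ℕ) : ℤ) := by omega
    rw [hd]
    exact hwindow' _ (by omega)
  -- the clamp formula
  have hclamp : ∀ x : ℤ, C x = max 0 (min (l : ℤ) (Phi n l F x + t)) := by
    intro x
    rcases lt_trichotomy x b0 with hx | hx | hx
    · have hC0 : C x = 0 := by
        rw [hC]
        simp only []
        rw [Finset.filter_false_of_mem, Finset.card_empty]
        · rfl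
        · intro j _
          have := hlow j
          omega
      have h1 : Phi n l F x ≤ Phi n l F (b0 - 1) := Phi_mono hF (by omega)
      have h2 : Phi n l F b0 = Phi n l F (b0 - 1) + F ((b0 : ℤ) : ZMod n) := Phi_succ hF b0
      have := hCb0le
      have hl0 : (0:ℤ) ≤ l := by positivity
      omega
    · have h := hwindow b0 le_rfl (by omega)
      have := hCm b0
      rw [hx]
      omega
    · rcases lt_or_ge x (b0 + n) with hxn | hxn
      · have h := hwindow x (by omega) hxn
        have := hCm x
        omega
      · have hCl : C x = l := by
          rw [hCx]
          rw [Finset.filter_true_of_mem, Finset.card_univ, Fintype.card_fin]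
          intro j _
          have := hhigh j
          omega
        have h1 : Phi n l F (b0 + n) ≤ Phi n l F x := Phi_mono hF hxn
        have h2 : Phi n l F (b0 + n) = Phi n l F b0 + l := Phi_add_n F b0
        have h3 := (hCm b0).1
        have hl0 : (0:ℤ) ≤ l := by positivity
        omega
  refine ⟨t, fun j => ?_⟩
  have hjl : ((j:ℕ):ℤ) + 1 ≤ l := by exact_mod_cast j.isLt
  apply le_antisymm
  · -- b j ≤ minx (j+1-t)
    have h1 : ((j:ℕ):ℤ) + 1 - t ≤ Phi n l F (minx n l F (((j:ℕ):ℤ) + 1 - t)) :=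
      (minx_spec hl hF _).1
    rw [key j (minx n l F (((j:ℕ):ℤ) + 1 - t)), hclamp (minx n l F (((j:ℕ):ℤ) + 1 - t))]
    omega
  · rw [minx_le_iff hl hF]
    have h1 : ((j:ℕ):ℤ) + 1 ≤ C (b j) := (key j (b j)).1 le_rfl
    rw [hclamp (b j)] at h1
    omega

/-- the maximal block below `u`. -/
noncomputable def tstar (n l : ℕ) (F : ZMod n → ℕ) (hl : 0 < l) (u : Fin l → ℤ) : ℤ :=
  Finset.univ.sup' (Finset.univ_nonempty_iff.2 ⟨⟨0, hl⟩⟩)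
    (fun j : Fin l => ((j:ℕ):ℤ) + 1 - Phi n l F (u j))

noncomputable def blk (n l : ℕ) (F : ZMod n → ℕ) (hl : 0 < l) (u : Fin l → ℤ) :
    Fin l → ℤ :=
  fun j => minx n l F (((j:ℕ):ℤ) + 1 - tstar n l F hl u)

lemma blk_isBlk (hl : 0 < l) (hF : ∑ i, F i = l) (u : Fin l → ℤ) :
    IsBlk n l F (blk n l F hl u) := blkOf_isBlk hl hF _

lemma blk_le (hl : 0 < l) (hF : ∑ i, F i = l) (u : Fin l → ℤ) (j : Fin l) :
    blk n l F hl u j ≤ u j := by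
  unfold blk
  rw [minx_le_iff hl hF]
  have h : ((j:ℕ):ℤ) + 1 - Phi n l F (u j)
      ≤ Finset.univ.sup' (Finset.univ_nonempty_iff.2 ⟨⟨0, hl⟩⟩)
        (fun j : Fin l => ((j:ℕ):ℤ) + 1 - Phi n l F (u j)) :=
    Finset.le_sup' (fun j : Fin l => ((j:ℕ):ℤ) + 1 - Phi n l F (u j)) (Finset.mem_univ j)
  unfold tstar
  omega

lemma blk_max (hl : 0 < l) (hF : ∑ i, F i = l) (u : Fin l → ℤ) {b : Fin l → ℤ}
    (hb : IsBlk n l F b) (hble : ∀ j, b j ≤ u j) (j : Fin l) :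
    b j ≤ blk n l F hl u j := by
  obtain ⟨t, hbt⟩ := isBlk_eq_blkOf hl hF hb
  have htt : tstar n l F hl u ≤ t := by
    apply Finset.sup'_le
    intro j' _
    show ((j':ℕ):ℤ) + 1 - Phi n l F (u j') ≤ t
    have h1 : minx n l F (((j':ℕ):ℤ) + 1 - t) ≤ u j' := by rw [← hbt j']; exact hble j'
    rw [minx_le_iff hl hF] at h1
    omega
  rw [hbt j]
  unfold blk
  exact minx_mono hl hF (by omega)

end Block


lemma nat_card_subtype {α : Type*} [Fintype α] (P : α → Prop) [DecidablePred P] :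
    Nat.card {x // P x} = (Finset.univ.filter P).card := by
  rw [Nat.card_eq_fintype_card, Fintype.card_subtype]

lemma partition_eq_of_colHt {f g : ℕ → ℕ} (hf : BF.IsPartitionF f) (hg : BF.IsPartitionF g)
    (h : ∀ k, BF.colHt f (k + 1) = BF.colHt g (k + 1)) : f = g := by
  obtain ⟨hfs, Nf, hf0⟩ := hf
  obtain ⟨hgs, Ng, hg0⟩ := hg
  have haf : Antitone f := antitone_nat_of_succ_le hfs
  have hag : Antitone g := antitone_nat_of_succ_le hgs
  funext i
  have key : ∀ m : ℕ, (m + 1 ≤ f i ↔ m + 1 ≤ g i) := by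
    intro m
    rw [← colHt_iff haf hf0 (Nat.succ_le_succ (Nat.zero_le m)) i,
      ← colHt_iff hag hg0 (Nat.succ_le_succ (Nat.zero_le m)) i, h m]
  by_contra hne
  rcases Nat.lt_or_ge (f i) (g i) with hlt | hge
  · exact absurd ((key (f i)).2 (by omega)) (by omega)
  · exact absurd ((key (g i)).1 (by omega)) (by omega)


end Aux
end AuxSec

set_option maxHeartbeats 3200000 in
/-- every `Λ`-path has a unique highest-lift: a cylindrical multipartition
mapping to `p` under `π` which is higher than all cylindrical preimages of `p`.
In particular `π` restricted to cylindrical multipartitions is surjective onto `𝒫(Λ)`. -/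
theorem highest_lift_exists_unique (n : ℕ) [NeZero n] (hn : 2 ≤ n) (l : ℕ)
    (v : Fin l → ℕ) (hv : SortedV n l v) (p : ℕ → ZMod n → ℤ)
    (hp : IsPath n l (wtOf n v) p) :
    ∃! lam : Fin l → ℕ → ℕ,
      IsMP l lam ∧ Cylindrical n v lam ∧ IsPi n v lam p ∧
        ∀ mu : Fin l → ℕ → ℕ,
          IsMP l mu → Cylindrical n v mu → IsPi n v mu p → Higher lam mu := by
  classical
  obtain ⟨hsteps, K₀, hK⟩ := hp
  rcases Nat.eq_zero_or_pos l with hl0 | hl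
  · -- degenerate level-0 case
    subst hl0
    have hstep0 : ∀ k, (fun i => p (k + 1) i - p k i) = (fun _ : ZMod n => (0:ℤ)) := by
      intro k
      obtain ⟨e0, hs0, he0⟩ := hsteps k
      have hz : ∀ i, e0 i = 0 := by
        intro i
        have := Finset.sum_eq_zero_iff.1 hs0 i (Finset.mem_univ i)
        exact this
      funext i
      have h := congrFun he0 i
      simp only [stepWt, hz, Nat.cast_zero, sub_zero] at h
      rw [h]
    have heFun0 : ∀ (lam : Fin 0 → ℕ → ℕ) k i, eFun n v lam k i = 0 := by
      intro lam k i
      unfold eFun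
      rw [Aux.nat_card_subtype]
      simp
    refine ⟨fun _ _ => 0, ⟨fun j => j.elim0, ⟨fun j hj i => by omega, fun h0 i => by omega⟩,
      ⟨?_, K₀, hK⟩, fun mu _ _ _ j => j.elim0⟩, ?_⟩
    · intro k
      rw [hstep0 k]
      funext i
      simp [stepWt, heFun0]
    · intro lam' _
      funext j
      exact j.elim0
  -- main case : 0 < l
  have hnpos : 0 < n := by omega
  have hnZ : 0 < (n : ℤ) := by exact_mod_cast hnpos
  -- choose the step data e k
  obtain ⟨e, he⟩ : ∃ e : ℕ → ZMod n → ℕ, ∀ k,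
      (∑ i, e k i) = l ∧ (fun i => p (k + 1) i - p k i) = stepWt n (e k) :=
    ⟨fun k => (hsteps k).choose, fun k => (hsteps k).choose_spec⟩
  set Fk : ℕ → ZMod n → ℕ := fun k r => e k (r + (k : ZMod n)) with hFkdef
  have hFksum : ∀ k, ∑ i, Fk k i = l := by
    intro k
    rw [← (he k).1]
    exact Fintype.sum_equiv (Equiv.addRight ((k : ℕ) : ZMod n)) _ _ (fun i => rfl)
  set resv : ZMod n → ℕ :=
    fun i => (Finset.univ.filter fun j : Fin l => ((v j : ℕ) : ZMod n) = i).card with hresvdef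
  have hwt : ∀ x, wtOf n v x = (resv x : ℤ) := fun x => rfl
  have hresv_sum : ∑ i, resv i = l := by
    have := Finset.card_eq_sum_card_fiberwise
      (f := fun j : Fin l => ((v j : ℕ) : ZMod n)) (s := Finset.univ) (t := Finset.univ)
      (fun x _ => Finset.mem_univ _)
    simp only [Finset.card_univ, Fintype.card_fin] at this
    rw [← this]
  -- ground state values of e
  have hegs : ∀ k, K₀ ≤ k → e k = fun i => resv (i - (k : ZMod n)) := by
    intro k hk
    apply stepWt_inj
    · have hsum2 : ∑ i : ZMod n, resv (i - ((k : ℕ) : ZMod n)) = ∑ i : ZMod n, resv i :=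
        Fintype.sum_equiv (Equiv.subRight ((k : ℕ) : ZMod n)) _ _ (fun i => rfl)
      exact ((he k).1).trans (hsum2.trans hresv_sum).symm
    · funext i
      have h1 : stepWt n (e k) i = p (k + 1) i - p k i := (congrFun (he k).2 i).symm
      rw [h1, hK k hk, hK (k + 1) (by omega)]
      unfold gsp stepWt
      rw [hwt, hwt]
      have hc : i - ((k + 1 : ℕ) : ZMod n) = i - 1 - ((k : ℕ) : ZMod n) := by
        push_cast
        ring
      rw [hc]
  have hFkgs : ∀ k, K₀ ≤ k → Fk k = resv := by
    intro k hk
    funext r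
    rw [hFkdef]
    simp only []
    rw [hegs k hk]
    simp only [add_sub_cancel_right]
  -- the maximal bead positions, by downward recursion from the ground state
  obtain ⟨b, hbK, hbrec⟩ : ∃ b : ℕ → Fin l → ℤ,
      (∀ m, K₀ ≤ m → b m = fun j => ((v j : ℕ) : ℤ)) ∧
      (∀ m, m < K₀ → b m = Aux.blk n l (Fk m) hl (b (m + 1))) := by
    let G : ℕ → Fin l → ℤ := fun d => Nat.rec (motive := fun _ => Fin l → ℤ)
      (fun j => ((v j : ℕ) : ℤ)) (fun d prev => Aux.blk n l (Fk (K₀ - d - 1)) hl prev) d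
    refine ⟨fun m => if K₀ ≤ m then (fun j => ((v j : ℕ) : ℤ)) else G (K₀ - m),
      fun m h => by dsimp only; rw [if_pos h], fun m hm => ?_⟩
    dsimp only
    rw [if_neg (by omega)]
    have hd : K₀ - m = (K₀ - m - 1) + 1 := by omega
    rw [hd]
    show Aux.blk n l (Fk (K₀ - (K₀ - m - 1) - 1)) hl (G (K₀ - m - 1)) = _
    have hix : K₀ - (K₀ - m - 1) - 1 = m := by omega
    rw [hix]
    congr 1
    by_cases h1 : K₀ ≤ m + 1
    · rw [if_pos h1]
      have h2 : K₀ - m - 1 = 0 := by omega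
      rw [h2]
      rfl
    · rw [if_neg h1]
      have h2 : K₀ - (m + 1) = K₀ - m - 1 := by omega
      rw [h2]
  have hresv_blk : Aux.IsBlk n l resv (fun j => ((v j : ℕ) : ℤ)) := by
    refine ⟨fun j j' hjj => by
      show ((v j : ℕ) : ℤ) ≤ ((v j' : ℕ) : ℤ)
      exact_mod_cast hv.1 hjj, fun j j' => ?_, fun i => ?_⟩
    · have h1 := hv.2 j'
      have h2 : 0 ≤ v j := Nat.zero_le _
      push_cast
      omega
    · rw [hresvdef]
      apply Finset.card_nbij (fun j => j) (fun j hj => by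
        simp only [Finset.mem_coe, Finset.mem_filter, Finset.mem_univ, true_and] at *
        rw [← hj]
        push_cast
        rfl)
      · intro a _ c _ h
        exact h
      · intro a ha
        refine ⟨a, ?_, rfl⟩
        simp only [Finset.coe_filter, Finset.mem_univ, true_and, Set.mem_setOf_eq] at *
        rw [← ha]
        push_cast
        rfl
  have hb_isBlk : ∀ m, Aux.IsBlk n l (Fk m) (b m) := by
    intro m
    by_cases hm : K₀ ≤ m
    · rw [hbK m hm, hFkgs m hm]
      exact hresv_blk
    · rw [hbrec m (by omega)]
      exact Aux.blk_isBlk hl (hFksum m) _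
  have hb_le_succ : ∀ m j, b m j ≤ b (m + 1) j := by
    intro m j
    by_cases hm : K₀ ≤ m
    · rw [hbK m hm, hbK (m + 1) (by omega)]
    · rw [hbrec m (by omega)]
      exact Aux.blk_le hl (hFksum m) _ j
  have hb_le_v : ∀ m j, b m j ≤ ((v j : ℕ) : ℤ) := by
    have haux : ∀ d m, K₀ ≤ m + d → ∀ j, b m j ≤ ((v j : ℕ) : ℤ) := by
      intro d
      induction d with
      | zero =>
        intro m h j
        rw [hbK m (by omega)]
      | succ d ih =>
        intro m h j
        by_cases hm : K₀ ≤ m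
        · rw [hbK m hm]
        · exact le_trans (hb_le_succ m j) (ih (m + 1) (by omega) j)
    intro m j
    exact haux K₀ m (by omega) j
  -- column heights
  obtain ⟨c, hcv⟩ : ∃ c : ℕ → Fin l → ℕ, ∀ m j, ((c m j : ℕ) : ℤ) = ((v j : ℕ) : ℤ) - b m j :=
    ⟨fun m j => (((v j : ℕ) : ℤ) - b m j).toNat,
      fun m j => Int.toNat_of_nonneg (by have := hb_le_v m j; omega)⟩
  have hcanti : ∀ j, Antitone fun m => c m j := by
    intro j
    apply antitone_nat_of_succ_le
    intro m
    have h1 := hcv m j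
    have h2 := hcv (m + 1) j
    have h3 := hb_le_succ m j
    omega
  have hc0 : ∀ j m, K₀ ≤ m → c m j = 0 := by
    intro j m hm
    have h1 := hcv m j
    have h2 : b m j = ((v j : ℕ) : ℤ) := congrFun (hbK m hm) j
    omega
  -- the multipartition
  set lam : Fin l → ℕ → ℕ := fun j => Aux.lamOf (fun m => c m j) K₀ with hlamdef
  have hMP : IsMP l lam := by
    intro j
    constructor
    · intro i
      exact Aux.lamOf_mono _ _ i
    · exact ⟨c 0 j, fun i hi => Aux.lamOf_zero _ _ hi (hcanti j)⟩
  have hcolHt : ∀ j m, colHt (lam j) (m + 1) = c m j := by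
    intro j m
    exact Aux.colHt_lamOf (hcanti j) (fun m hm => hc0 j m hm) m
  -- cylindricity
  have hCyl : Cylindrical n v lam := by
    constructor
    · intro j hj i
      apply Finset.card_le_card
      intro m hm
      simp only [Finset.mem_filter, Finset.mem_range] at *
      have hmono := (hb_isBlk m).1
        (show (⟨j, Nat.lt_of_succ_lt hj⟩ : Fin l) ≤ ⟨j + 1, hj⟩ by
          rw [Fin.mk_le_mk]; omega)
      have h1 := hcv m ⟨j + 1, hj⟩
      have h2 := hcv m ⟨j, Nat.lt_of_succ_lt hj⟩
      have hvm : v ⟨j, Nat.lt_of_succ_lt hj⟩ ≤ v ⟨j + 1, hj⟩ :=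
        hv.1 (by rw [Fin.mk_le_mk]; omega)
      omega
    · intro hl' i
      apply Finset.card_le_card
      intro m hm
      simp only [Finset.mem_filter, Finset.mem_range] at *
      have hwin := (hb_isBlk m).2.1 ⟨0, hl'⟩ ⟨l - 1, Nat.sub_lt hl' Nat.one_pos⟩
      have h1 := hcv m ⟨0, hl'⟩
      have h2 := hcv m ⟨l - 1, Nat.sub_lt hl' Nat.one_pos⟩
      have hvm := hv.2 ⟨l - 1, Nat.sub_lt hl' Nat.one_pos⟩
      omega
  -- π(λ) = p
  have heFun : ∀ (mu : Fin l → ℕ → ℕ) k i, eFun n v mu k i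
      = (Finset.univ.filter fun j : Fin l =>
          ((v j : ℕ) : ZMod n) + ((k : ℕ) : ZMod n) - ((colHt (mu j) (k + 1) : ℕ) : ZMod n)
            = i).card := by
    intro mu k i
    unfold eFun
    rw [Aux.nat_card_subtype]
  have heFun_lam : ∀ k, eFun n v lam k = e k := by
    intro k
    funext i
    rw [heFun]
    have hsets : (Finset.univ.filter fun j : Fin l =>
        ((v j : ℕ) : ZMod n) + ((k : ℕ) : ZMod n) - ((colHt (lam j) (k + 1) : ℕ) : ZMod n) = i)
        = (Finset.univ.filter fun j : Fin l =>
          ((b k j : ℤ) : ZMod n) = i - ((k : ℕ) : ZMod n)) := by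
      ext j
      simp only [Finset.mem_filter, Finset.mem_univ, true_and]
      rw [hcolHt j k]
      have h1 : ((c k j : ℕ) : ZMod n) = ((v j : ℕ) : ZMod n) - ((b k j : ℤ) : ZMod n) := by
        have h2 : (((c k j : ℕ) : ℤ) : ZMod n) = ((((v j : ℕ) : ℤ) - b k j : ℤ) : ZMod n) := by
          rw [hcv k j]
        push_cast at h2
        exact_mod_cast h2
      rw [h1]
      constructor
      · intro h
        linear_combination h
      · intro h
        linear_combination h
    rw [hsets, (hb_isBlk k).2.2 (i - ((k : ℕ) : ZMod n))]
    rw [hFkdef]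
    simp only [sub_add_cancel]
  have hPi : IsPi n v lam p := by
    refine ⟨fun k => ?_, K₀, hK⟩
    rw [(he k).2, heFun_lam k]
  -- maximality
  have hMax : ∀ mu : Fin l → ℕ → ℕ,
      IsMP l mu → Cylindrical n v mu → IsPi n v mu p → Higher lam mu := by
    intro mu hmuMP hmuCyl hmuPi
    have hmuanti : ∀ j, Antitone (mu j) := fun j => antitone_nat_of_succ_le (hmuMP j).1
    have hmuN := fun j => (hmuMP j).2
    choose Nmu hNmu using hmuN
    set bmu : ℕ → Fin l → ℤ :=
      fun m j => ((v j : ℕ) : ℤ) - ((colHt (mu j) (m + 1) : ℕ) : ℤ) with hbmudef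
    -- eFun mu = e
    have hemu : ∀ k, eFun n v mu k = e k := by
      intro k
      apply stepWt_inj
      · rw [(he k).1]
        have := Finset.card_eq_sum_card_fiberwise
          (f := fun j : Fin l => ((v j : ℕ) : ZMod n) + ((k : ℕ) : ZMod n)
            - ((colHt (mu j) (k + 1) : ℕ) : ZMod n))
          (s := Finset.univ) (t := Finset.univ) (fun x _ => Finset.mem_univ _)
        simp only [Finset.card_univ, Fintype.card_fin] at this
        rw [show (∑ i, eFun n v mu k i) = ∑ i : ZMod n,
          (Finset.univ.filter fun j : Fin l =>
            ((v j : ℕ) : ZMod n) + ((k : ℕ) : ZMod n)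
              - ((colHt (mu j) (k + 1) : ℕ) : ZMod n) = i).card
          from Finset.sum_congr rfl fun i _ => heFun mu k i]
        omega
      · have h1 := (hmuPi.1 k).symm.trans (he k).2
        rw [← h1]
    -- residue counts of bmu
    have hmures : ∀ m i, (Finset.univ.filter fun j : Fin l =>
        ((bmu m j : ℤ) : ZMod n) = i).card = Fk m i := by
      intro m i
      rw [hFkdef]
      simp only []
      rw [← congrFun (hemu m) (i + ((m : ℕ) : ZMod n)), heFun]
      congr 1
      ext j
      simp only [Finset.mem_filter, Finset.mem_univ, true_and]
      rw [hbmudef]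
      have hc : (((((v j : ℕ) : ℤ) - ((colHt (mu j) (m + 1) : ℕ) : ℤ)) : ℤ) : ZMod n)
          = ((v j : ℕ) : ZMod n) - ((colHt (mu j) (m + 1) : ℕ) : ZMod n) := by
        push_cast
        ring
      rw [hc]
      constructor
      · intro h
        linear_combination h
      · intro h
        linear_combination h
    -- adjacent cylindricity in column form
    have hadj : ∀ m (j : ℕ) (hj : j + 1 < l),
        ((colHt (mu ⟨j + 1, hj⟩) (m + 1) : ℕ) : ℤ)
          ≤ ((colHt (mu ⟨j, Nat.lt_of_succ_lt hj⟩) (m + 1) : ℕ) : ℤ)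
            + ((v ⟨j + 1, hj⟩ - v ⟨j, Nat.lt_of_succ_lt hj⟩ : ℕ) : ℤ) := by
      intro m j hj
      by_contra hgt
      push_neg at hgt
      have hlt : colHt (mu ⟨j, Nat.lt_of_succ_lt hj⟩) (m + 1)
          + (v ⟨j + 1, hj⟩ - v ⟨j, Nat.lt_of_succ_lt hj⟩)
          < colHt (mu ⟨j + 1, hj⟩) (m + 1) := by
        push_cast at hgt
        omega
      have h1 : m + 1 ≤ mu ⟨j + 1, hj⟩ (colHt (mu ⟨j, Nat.lt_of_succ_lt hj⟩) (m + 1)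
          + (v ⟨j + 1, hj⟩ - v ⟨j, Nat.lt_of_succ_lt hj⟩)) :=
        (Aux.colHt_iff (hmuanti _) (hNmu _) (by omega : 1 ≤ m + 1) _).1 hlt
      have h2 := hmuCyl.1 j hj (colHt (mu ⟨j, Nat.lt_of_succ_lt hj⟩) (m + 1))
      have h3 : m + 1 ≤ mu ⟨j, Nat.lt_of_succ_lt hj⟩
          (colHt (mu ⟨j, Nat.lt_of_succ_lt hj⟩) (m + 1)) := by omega
      have h4 := (Aux.colHt_iff (hmuanti _) (hNmu _) (by omega : 1 ≤ m + 1) _).2 h3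
      omega
    have hwrap : ∀ m,
        ((colHt (mu ⟨0, hl⟩) (m + 1) : ℕ) : ℤ)
          ≤ ((colHt (mu ⟨l - 1, Nat.sub_lt hl Nat.one_pos⟩) (m + 1) : ℕ) : ℤ)
            + ((n + v ⟨0, hl⟩ - v ⟨l - 1, Nat.sub_lt hl Nat.one_pos⟩ : ℕ) : ℤ) := by
      intro m
      by_contra hgt
      push_neg at hgt
      have hlt : colHt (mu ⟨l - 1, Nat.sub_lt hl Nat.one_pos⟩) (m + 1)
          + (n + v ⟨0, hl⟩ - v ⟨l - 1, Nat.sub_lt hl Nat.one_pos⟩)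
          < colHt (mu ⟨0, hl⟩) (m + 1) := by
        push_cast at hgt
        omega
      have h1 : m + 1 ≤ mu ⟨0, hl⟩ (colHt (mu ⟨l - 1, Nat.sub_lt hl Nat.one_pos⟩) (m + 1)
          + (n + v ⟨0, hl⟩ - v ⟨l - 1, Nat.sub_lt hl Nat.one_pos⟩)) :=
        (Aux.colHt_iff (hmuanti _) (hNmu _) (by omega : 1 ≤ m + 1) _).1 hlt
      have h2 := hmuCyl.2 hl (colHt (mu ⟨l - 1, Nat.sub_lt hl Nat.one_pos⟩) (m + 1))
      have h3 : m + 1 ≤ mu ⟨l - 1, Nat.sub_lt hl Nat.one_pos⟩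
          (colHt (mu ⟨l - 1, Nat.sub_lt hl Nat.one_pos⟩) (m + 1)) := by omega
      have h4 := (Aux.colHt_iff (hmuanti _) (hNmu _) (by omega : 1 ≤ m + 1) _).2 h3
      omega
    -- bmu is monotone in j
    have hmono_chain : ∀ m (d a : ℕ) (h : a + d < l),
        bmu m ⟨a, by omega⟩ ≤ bmu m ⟨a + d, h⟩ := by
      intro m d
      induction d with
      | zero => intro a h; exact le_of_eq (by norm_num)
      | succ d ih =>
        intro a h
        have h1 : a + d < l := by omega
        have h2 := ih a h1
        have h3 := hadj m (a + d) (by omega : (a + d) + 1 < l)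
        have h4 : v ⟨a + d, h1⟩ ≤ v ⟨(a + d) + 1, by omega⟩ := hv.1 (by rw [Fin.mk_le_mk]; omega)
        have h5 : bmu m ⟨a + d, h1⟩ ≤ bmu m ⟨a + d + 1, by omega⟩ := by
          rw [hbmudef]
          simp only []
          have hcast : ((v ⟨a + d + 1, by omega⟩ - v ⟨a + d, h1⟩ : ℕ) : ℤ)
              = ((v ⟨a + d + 1, by omega⟩ : ℕ) : ℤ) - ((v ⟨a + d, h1⟩ : ℕ) : ℤ) := by
            omega
          have h3' := h3
          rw [hcast] at h3'
          omega
        exact le_trans h2 h5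
    have hmu_mono : ∀ m, Monotone (bmu m) := by
      intro m j j' hjj
      have hle : (j : ℕ) ≤ (j' : ℕ) := hjj
      have hkey := hmono_chain m ((j' : ℕ) - (j : ℕ)) (j : ℕ) (by omega)
      have e1 : (⟨(j : ℕ), by omega⟩ : Fin l) = j := by
        apply Fin.ext
        rfl
      have e2 : (⟨(j : ℕ) + ((j' : ℕ) - (j : ℕ)), by omega⟩ : Fin l) = j' := by
        apply Fin.ext
        show (j : ℕ) + ((j' : ℕ) - (j : ℕ)) = (j' : ℕ)
        omega
      rw [e1, e2] at hkey
      exact hkey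
    -- bmu is a block
    have hmu_isBlk : ∀ m, Aux.IsBlk n l (Fk m) (bmu m) := by
      intro m
      refine ⟨hmu_mono m, fun j j' => ?_, hmures m⟩
      have hj1 : bmu m j' ≤ bmu m ⟨l - 1, Nat.sub_lt hl Nat.one_pos⟩ :=
        hmu_mono m (by rw [Fin.le_def]; simp; omega)
      have hj2 : bmu m ⟨0, hl⟩ ≤ bmu m j := hmu_mono m (by rw [Fin.le_def]; simp)
      have hw := hwrap m
      rw [hbmudef] at *
      simp only [] at *
      have hvb := hv.2 ⟨l - 1, Nat.sub_lt hl Nat.one_pos⟩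
      have hcast : ((n + v ⟨0, hl⟩ - v ⟨l - 1, Nat.sub_lt hl Nat.one_pos⟩ : ℕ) : ℤ)
          = (n : ℤ) + ((v ⟨0, hl⟩ : ℕ) : ℤ) - ((v ⟨l - 1, Nat.sub_lt hl Nat.one_pos⟩ : ℕ) : ℤ) := by
        omega
      rw [hcast] at hw
      omega
    -- bmu ≤ v and bmu m ≤ bmu (m+1)
    have hmu_le_v : ∀ m j, bmu m j ≤ ((v j : ℕ) : ℤ) := by
      intro m j
      rw [hbmudef]
      simp only []
      have : (0 : ℤ) ≤ ((colHt (mu j) (m + 1) : ℕ) : ℤ) := by positivity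
      omega
    have hmu_le_succ : ∀ m j, bmu m j ≤ bmu (m + 1) j := by
      intro m j
      rw [hbmudef]
      simp only []
      have := Aux.colHt_anti (g := mu j) (hNmu j) (by omega : 1 ≤ m + 1)
        (by omega : m + 1 ≤ m + 1 + 1)
      omega
    -- downward induction : bmu ≤ b
    have hmu_le_b : ∀ m j, bmu m j ≤ b m j := by
      have haux : ∀ d m, K₀ ≤ m + d → ∀ j, bmu m j ≤ b m j := by
        intro d
        induction d with
        | zero =>
          intro m h j
          rw [hbK m (by omega)]
          exact hmu_le_v m j
        | succ d ih =>
          intro m h j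
          by_cases hm : K₀ ≤ m
          · rw [hbK m hm]
            exact hmu_le_v m j
          · rw [hbrec m (by omega)]
            refine Aux.blk_max hl (hFksum m) _ (hmu_isBlk m) (fun j' => ?_) j
            exact le_trans (hmu_le_succ m j') (ih (m + 1) (by omega) j')
      intro m j
      exact haux K₀ m (by omega) j
    -- conclude
    intro j k hk
    have hk1 : k = (k - 1) + 1 := by omega
    rw [hk1, hcolHt j (k - 1)]
    have h1 := hmu_le_b (k - 1) j
    have h2 := hcv (k - 1) j
    rw [hbmudef] at h1
    simp only [] at h1
    omega
  refine ⟨lam, ⟨hMP, hCyl, hPi, hMax⟩, ?_⟩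
  intro lam' ⟨hMP', hCyl', hPi', hMax'⟩
  have h1 : Higher lam lam' := hMax lam' hMP' hCyl' hPi'
  have h2 : Higher lam' lam := hMax' lam hMP hCyl hPi
  funext j
  exact Aux.partition_eq_of_colHt (hMP' j) (hMP j)
    (fun k => le_antisymm (h2 j (k + 1) (by omega)) (h1 j (k + 1) (by omega)))

end BF
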